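/- arXiv:2206.05580 — 11 statements merged into one kernel-verified Lean document; each statement's English description precedes it below -/
import Mathlib

section
/- For all Ω, λ ∈ ℝ, ξ ∈ ℝ² and E ∈ ℂ, the characteristic determinant of the AB-stacked bulk Hamiltonian factorizes as det(H₊(ξ) − E·I₄) = (|ξ|² − (E−Ω)²)(|ξ|² − (E+Ω)²) − λ²(E² − Ω²). -/
open Complex Matrix

/-!
`H₊(ξ) − E` is tridiagonal, so its determinant is given by the continuant recursion: the
product of the diagonal entries, corrected by the products `u l` of opposite off-diagonal
entries. Here those products are `conj ξ · ξ = |ξ|²` twice and `λ²` once, with diagonal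
`Ω − E, Ω − E, −Ω − E, −Ω − E`, which regroups into the stated factorization.
-/

/-- The Fourier-domain bulk Hamiltonian of gated twisted bilayer graphene with
AB stacking (valley `η = 1`): gating potential `Ω`, interlayer coupling `lam`,
momentum `ξ = (ξ₁, ξ₂)` identified with the complex number `ξ₁ + i ξ₂`. -/
noncomputable def Hplus (Ω lam : ℝ) (ξ : ℝ × ℝ) : Matrix (Fin 4) (Fin 4) ℂ :=
  !![(Ω : ℂ), (ξ.1 : ℂ) - (ξ.2 : ℂ) * I, 0, 0;
     (ξ.1 : ℂ) + (ξ.2 : ℂ) * I, (Ω : ℂ), (lam : ℂ), 0;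
     0, (lam : ℂ), -(Ω : ℂ), (ξ.1 : ℂ) - (ξ.2 : ℂ) * I;
     0, 0, (ξ.1 : ℂ) + (ξ.2 : ℂ) * I, -(Ω : ℂ)]

theorem det_tridiagonal_fin_four {R : Type*} [CommRing R] (d₀ d₁ d₂ d₃ u₀ u₁ u₂ l₀ l₁ l₂ : R) :
    (!![d₀, u₀, 0, 0; l₀, d₁, u₁, 0; 0, l₁, d₂, u₂; 0, 0, l₂, d₃] : Matrix (Fin 4) (Fin 4) R).det =
      d₀ * d₁ * d₂ * d₃ - u₀ * l₀ * d₂ * d₃ - u₁ * l₁ * d₀ * d₃ - u₂ * l₂ * d₀ * d₁ +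
        u₀ * l₀ * (u₂ * l₂) := by
  simp [det_succ_row_zero, Fin.sum_univ_succ, Fin.succAbove]
  ring

theorem Hplus_sub_smul_one (Ω lam : ℝ) (ξ : ℝ × ℝ) (E : ℂ) :
    Hplus Ω lam ξ - E • (1 : Matrix (Fin 4) (Fin 4) ℂ) =
      !![(Ω : ℂ) - E, (ξ.1 : ℂ) - (ξ.2 : ℂ) * I, 0, 0;
         (ξ.1 : ℂ) + (ξ.2 : ℂ) * I, (Ω : ℂ) - E, (lam : ℂ), 0;
         0, (lam : ℂ), -(Ω : ℂ) - E, (ξ.1 : ℂ) - (ξ.2 : ℂ) * I;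
         0, 0, (ξ.1 : ℂ) + (ξ.2 : ℂ) * I, -(Ω : ℂ) - E] := by
  ext i j
  fin_cases i <;> fin_cases j <;> simp [Hplus, one_apply]

theorem ofReal_sub_mul_I_mul_ofReal_add_mul_I (x y : ℝ) :
    ((x : ℂ) - y * I) * ((x : ℂ) + y * I) = ((x ^ 2 + y ^ 2 : ℝ) : ℂ) := by
  push_cast
  linear_combination (-(y : ℂ) ^ 2) * I_sq

/-- The characteristic determinant of the AB-stacked bulk Hamiltonian factorizes as
`det(H₊(ξ) − E·I₄) = (|ξ|² − (E−Ω)²)(|ξ|² − (E+Ω)²) − λ²(E² − Ω²)`. -/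
theorem charDet_Hplus_factorized (Ω lam : ℝ) (ξ : ℝ × ℝ) (E : ℂ) :
    (Hplus Ω lam ξ - E • (1 : Matrix (Fin 4) (Fin 4) ℂ)).det =
      (((ξ.1 ^ 2 + ξ.2 ^ 2 : ℝ) : ℂ) - (E - (Ω : ℂ)) ^ 2) *
        (((ξ.1 ^ 2 + ξ.2 ^ 2 : ℝ) : ℂ) - (E + (Ω : ℂ)) ^ 2) -
      (lam : ℂ) ^ 2 * (E ^ 2 - (Ω : ℂ) ^ 2) := by
  rw [Hplus_sub_smul_one, det_tridiagonal_fin_four, ofReal_sub_mul_I_mul_ofReal_add_mul_I]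
  ring
end

section
/- For all Ω, λ ∈ ℝ, ξ ∈ ℝ² and E ∈ ℂ, det(H₊(ξ) − E·I₄) = E⁴ − (2Ω² + 2|ξ|² + λ²)E² + (|ξ|² − Ω²)² + λ²Ω²; in particular E is an eigenvalue of H₊(ξ) if and only if E⁴ − (2Ω² + 2|ξ|² + λ²)E² + (|ξ|² − Ω²)² + λ²Ω² = 0. -/
open Complex Matrix

theorem det_fin_four' {R : Type*} [CommRing R] (A : Matrix (Fin 4) (Fin 4) R) :
    det A =
      A 0 0 * (A 1 1 * A 2 2 * A 3 3 - A 1 1 * A 2 3 * A 3 2 - A 1 2 * A 2 1 * A 3 3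
        + A 1 2 * A 2 3 * A 3 1 + A 1 3 * A 2 1 * A 3 2 - A 1 3 * A 2 2 * A 3 1)
      - A 0 1 * (A 1 0 * A 2 2 * A 3 3 - A 1 0 * A 2 3 * A 3 2 - A 1 2 * A 2 0 * A 3 3
        + A 1 2 * A 2 3 * A 3 0 + A 1 3 * A 2 0 * A 3 2 - A 1 3 * A 2 2 * A 3 0)
      + A 0 2 * (A 1 0 * A 2 1 * A 3 3 - A 1 0 * A 2 3 * A 3 1 - A 1 1 * A 2 0 * A 3 3
        + A 1 1 * A 2 3 * A 3 0 + A 1 3 * A 2 0 * A 3 1 - A 1 3 * A 2 1 * A 3 0)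
      - A 0 3 * (A 1 0 * A 2 1 * A 3 2 - A 1 0 * A 2 2 * A 3 1 - A 1 1 * A 2 0 * A 3 2
        + A 1 1 * A 2 2 * A 3 0 + A 1 2 * A 2 0 * A 3 1 - A 1 2 * A 2 1 * A 3 0) := by
  rw [Matrix.det_succ_row_zero, Fin.sum_univ_four]
  norm_num [Matrix.det_fin_three, Matrix.submatrix_apply, Fin.zero_succAbove,
    Fin.succ_zero_eq_one, Fin.succ_one_eq_two,
    show (Fin.succ 2 : Fin 4) = 3 by decide,
    show Fin.succAbove (1 : Fin 4) 2 = 3 by decide,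
    show Fin.succAbove (2 : Fin 4) 0 = 0 by decide,
    show Fin.succAbove (2 : Fin 4) 1 = 1 by decide,
    show Fin.succAbove (2 : Fin 4) 2 = 3 by decide,
    show Fin.succAbove (3 : Fin 4) 0 = 0 by decide,
    show Fin.succAbove (3 : Fin 4) 1 = 1 by decide,
    show Fin.succAbove (3 : Fin 4) 2 = 2 by decide,
    show ((3 : Fin 4) : ℕ) = 3 from rfl]
  ring

/-- `det(H₊(ξ) − E·I₄) = E⁴ − (2Ω² + 2|ξ|² + λ²)E² + (|ξ|² − Ω²)² + λ²Ω²`; in particular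
`E` is an eigenvalue of `H₊(ξ)` iff this quartic expression vanishes. -/
theorem charDet_Hplus_quartic (Ω lam : ℝ) (ξ : ℝ × ℝ) (E : ℂ) :
    (Hplus Ω lam ξ - E • (1 : Matrix (Fin 4) (Fin 4) ℂ)).det =
      E ^ 4 - ((2 * Ω ^ 2 + 2 * (ξ.1 ^ 2 + ξ.2 ^ 2) + lam ^ 2 : ℝ) : ℂ) * E ^ 2 +
        ((ξ.1 ^ 2 + ξ.2 ^ 2 - Ω ^ 2 : ℝ) : ℂ) ^ 2 + (lam : ℂ) ^ 2 * (Ω : ℂ) ^ 2 ∧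
    (E ∈ spectrum ℂ (Hplus Ω lam ξ) ↔
      E ^ 4 - ((2 * Ω ^ 2 + 2 * (ξ.1 ^ 2 + ξ.2 ^ 2) + lam ^ 2 : ℝ) : ℂ) * E ^ 2 +
        ((ξ.1 ^ 2 + ξ.2 ^ 2 - Ω ^ 2 : ℝ) : ℂ) ^ 2 + (lam : ℂ) ^ 2 * (Ω : ℂ) ^ 2 = 0) := by
  have hdet : (Hplus Ω lam ξ - E • (1 : Matrix (Fin 4) (Fin 4) ℂ)).det =
      E ^ 4 - ((2 * Ω ^ 2 + 2 * (ξ.1 ^ 2 + ξ.2 ^ 2) + lam ^ 2 : ℝ) : ℂ) * E ^ 2 +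
        ((ξ.1 ^ 2 + ξ.2 ^ 2 - Ω ^ 2 : ℝ) : ℂ) ^ 2 + (lam : ℂ) ^ 2 * (Ω : ℂ) ^ 2 := by
    rw [det_fin_four']
    simp [Hplus, Matrix.one_apply, Matrix.vecHead, Matrix.vecTail]
    linear_combination (-(((ξ.1:ℂ)+(ξ.2:ℂ)*I)*((ξ.1:ℂ)-(ξ.2:ℂ)*I) + (ξ.1:ℂ)^2+(ξ.2:ℂ)^2
      - ((Ω:ℂ)-E)^2 - ((Ω:ℂ)+E)^2) * (ξ.2:ℂ)^2) * Complex.I_sq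
  refine ⟨hdet, ?_⟩
  rw [spectrum.mem_iff, Matrix.isUnit_iff_isUnit_det, isUnit_iff_ne_zero, not_ne_iff]
  have key : (algebraMap ℂ (Matrix (Fin 4) (Fin 4) ℂ) E - Hplus Ω lam ξ) =
      -(Hplus Ω lam ξ - E • (1 : Matrix (Fin 4) (Fin 4) ℂ)) := by
    simp [Algebra.algebraMap_eq_smul_one]
  rw [key, Matrix.det_neg, hdet]
  simp
end

section
/- For all Ω, λ ∈ ℝ, ξ ∈ ℝ² and E ∈ ℂ, det(H₊(ξ) − E·I₄) = det(H₋(ξ) − E·I₄); that is, the AB-stacked and BA-stacked bulk Hamiltonians have the same characteristic polynomial, hence the same eigenvalues, at every momentum ξ. -/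
/-!
Conjugating `H₊ᵀ` by the permutation `(0 1)(2 3)`, which exchanges the two sublattice sites
within each layer, gives exactly `H₋`. Transposition and permutation similarity preserve the
characteristic polynomial, and over a commutative ring the characteristic polynomial determines
both `det (H - E • 1)` and the spectrum.
-/

open Complex Matrix

/-- The Fourier-domain bulk Hamiltonian of gated twisted bilayer graphene with
BA stacking (valley `η = 1`). -/
noncomputable def Hminus (Ω lam : ℝ) (ξ : ℝ × ℝ) : Matrix (Fin 4) (Fin 4) ℂ :=
  !![(Ω : ℂ), (ξ.1 : ℂ) - (ξ.2 : ℂ) * I, 0, (lam : ℂ);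
     (ξ.1 : ℂ) + (ξ.2 : ℂ) * I, (Ω : ℂ), 0, 0;
     0, 0, -(Ω : ℂ), (ξ.1 : ℂ) - (ξ.2 : ℂ) * I;
     (lam : ℂ), 0, (ξ.1 : ℂ) + (ξ.2 : ℂ) * I, -(Ω : ℂ)]

namespace Matrix

variable {n R : Type*} [Fintype n] [DecidableEq n] [CommRing R] {A B : Matrix n n R}

theorem det_sub_smul_one_eq_of_charpoly_eq (h : A.charpoly = B.charpoly) (E : R) :
    (A - E • 1).det = (B - E • 1).det := by
  have key (M : Matrix n n R) : (M - E • 1).det = (-1) ^ Fintype.card n * M.charpoly.eval E := by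
    rw [eval_charpoly, ← det_neg, neg_sub, scalar_apply, smul_one_eq_diagonal]
  rw [key, key, h]

theorem spectrum_eq_of_charpoly_eq (h : A.charpoly = B.charpoly) :
    spectrum R A = spectrum R B := by
  ext r
  simp only [mem_spectrum_iff_not_isUnit_eval_charpoly, h]

end Matrix

def swapSites : Fin 4 ≃ Fin 4 := (Equiv.swap 0 1).trans (Equiv.swap 2 3)

theorem Hminus_eq_reindex_transpose_Hplus (Ω lam : ℝ) (ξ : ℝ × ℝ) :
    Hminus Ω lam ξ = reindex swapSites swapSites (Hplus Ω lam ξ)ᵀ := by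
  ext i j
  fin_cases i <;> fin_cases j <;> simp [Hplus, Hminus, swapSites, Equiv.swap_apply_def]

/-- The AB- and BA-stacked bulk Hamiltonians have the same characteristic determinant at
every energy, hence the same characteristic polynomial and the same eigenvalues, at every
momentum `ξ`. -/
theorem charDet_Hplus_eq_charDet_Hminus (Ω lam : ℝ) (ξ : ℝ × ℝ) :
    (∀ E : ℂ, (Hplus Ω lam ξ - E • (1 : Matrix (Fin 4) (Fin 4) ℂ)).det =
      (Hminus Ω lam ξ - E • (1 : Matrix (Fin 4) (Fin 4) ℂ)).det) ∧
    (Hplus Ω lam ξ).charpoly = (Hminus Ω lam ξ).charpoly ∧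
    spectrum ℂ (Hplus Ω lam ξ) = spectrum ℂ (Hminus Ω lam ξ) := by
  have hcharpoly : (Hplus Ω lam ξ).charpoly = (Hminus Ω lam ξ).charpoly := by
    rw [Hminus_eq_reindex_transpose_Hplus, charpoly_reindex, charpoly_transpose]
  exact ⟨det_sub_smul_one_eq_of_charpoly_eq hcharpoly, hcharpoly,
    spectrum_eq_of_charpoly_eq hcharpoly⟩
end

section
/- For all Ω, λ ∈ ℝ, ξ ∈ ℝ² and E ∈ ℂ, det(H₊(ξ) − E·I₄) = det(H₊(ξ) + E·I₄); consequently the spectrum of H₊(ξ) is symmetric about 0: E is an eigenvalue of H₊(ξ) if and only if −E is. -/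
open Complex Matrix

/-!
The signed index reversal `S = antidiag(1, -1, 1, -1)` intertwines `H₊(ξ)` with `-H₊(ξ)ᵀ`.
Hence `H₊(ξ) - E` is similar to `-(H₊(ξ) + E)ᵀ`, whose determinant in even dimension is
`det(H₊(ξ) + E)`.
-/

namespace Matrix

variable {n R : Type*} [Fintype n] [DecidableEq n]

theorem det_sub_smul_one_eq_det_add_smul_one_of_mul_eq_neg_transpose_mul [CommRing R]
    (hn : Even (Fintype.card n)) {A S : Matrix n n R} (hS : IsUnit S.det)
    (hSA : S * A = -Aᵀ * S) (E : R) : (A - E • 1).det = (A + E • 1).det := by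
  have hconj : S * (A - E • 1) = -(A + E • 1)ᵀ * S := by
    rw [mul_sub, hSA]
    simp [add_mul, sub_eq_add_neg, add_comm]
  have hdet := congrArg det hconj
  rw [det_mul, det_mul, det_neg, det_transpose, hn.neg_one_pow, one_mul] at hdet
  exact hS.mul_left_cancel (hdet.trans (mul_comm _ _))

theorem mem_spectrum_iff_det_sub_smul_one_eq_zero [Field R] (A : Matrix n n R) (E : R) :
    E ∈ spectrum R A ↔ (A - E • 1).det = 0 := by
  rw [spectrum.mem_iff, isUnit_iff_isUnit_det, isUnit_iff_ne_zero, not_ne_iff,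
    Algebra.algebraMap_eq_smul_one, ← neg_sub, det_neg, mul_eq_zero,
    or_iff_right (pow_ne_zero _ (neg_ne_zero.mpr one_ne_zero))]

end Matrix

def signedReversal : Matrix (Fin 4) (Fin 4) ℂ :=
  !![0, 0, 0, 1;
     0, 0, -1, 0;
     0, 1, 0, 0;
     -1, 0, 0, 0]

theorem signedReversal_mul_Hplus (Ω lam : ℝ) (ξ : ℝ × ℝ) :
    signedReversal * Hplus Ω lam ξ = -(Hplus Ω lam ξ)ᵀ * signedReversal := by
  ext i j
  fin_cases i <;> fin_cases j <;> simp [signedReversal, Hplus, mul_apply, Fin.sum_univ_four]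

theorem signedReversal_mul_self : signedReversal * signedReversal = -1 := by
  ext i j
  fin_cases i <;> fin_cases j <;> simp [signedReversal, mul_apply, Fin.sum_univ_four]

theorem isUnit_det_signedReversal : IsUnit signedReversal.det :=
  isUnit_det_of_left_inverse (B := -signedReversal) <| by
    rw [neg_mul, signedReversal_mul_self, neg_neg]

/-- `det(H₊(ξ) − E·I₄) = det(H₊(ξ) + E·I₄)` for every `E`; consequently the spectrum of
`H₊(ξ)` is symmetric about `0`: `E` is an eigenvalue iff `−E` is. -/
theorem charDet_Hplus_even (Ω lam : ℝ) (ξ : ℝ × ℝ) :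
    (∀ E : ℂ, (Hplus Ω lam ξ - E • (1 : Matrix (Fin 4) (Fin 4) ℂ)).det =
      (Hplus Ω lam ξ + E • (1 : Matrix (Fin 4) (Fin 4) ℂ)).det) ∧
    (∀ E : ℂ, E ∈ spectrum ℂ (Hplus Ω lam ξ) ↔ -E ∈ spectrum ℂ (Hplus Ω lam ξ)) := by
  have hdet : ∀ E : ℂ, (Hplus Ω lam ξ - E • (1 : Matrix (Fin 4) (Fin 4) ℂ)).det =
      (Hplus Ω lam ξ + E • (1 : Matrix (Fin 4) (Fin 4) ℂ)).det :=
    det_sub_smul_one_eq_det_add_smul_one_of_mul_eq_neg_transpose_mul (by decide)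
      isUnit_det_signedReversal (signedReversal_mul_Hplus Ω lam ξ)
  refine ⟨hdet, fun E => ?_⟩
  rw [mem_spectrum_iff_det_sub_smul_one_eq_zero, mem_spectrum_iff_det_sub_smul_one_eq_zero,
    hdet, neg_smul, sub_neg_eq_add]
end

section
/- For all Ω, λ ∈ ℝ and ξ ∈ ℝ², a real number E is an eigenvalue of H₊(ξ) if and only if E² = Ω² + λ²/2 + |ξ|² + √((4Ω² + λ²)|ξ|² + λ⁴/4) or E² = Ω² + λ²/2 + |ξ|² − √((4Ω² + λ²)|ξ|² + λ⁴/4). -/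
/-!
With `a = z - Ω`, `b = z + Ω` and `p = |ξ|²`, the matrix `z - H₊(ξ)` consists of two `2 × 2`
blocks of determinants `a² - p` and `b² - p`, coupled by a single entry `λ`, so
`det (z - H₊(ξ)) = (a² - p)(b² - p) - λ² a b`. This is a quadratic polynomial in `z²`,
namely `(z² - Ω² - λ²/2 - p)² - ((4Ω² + λ²) p + λ⁴/4)`, whose discriminant is
nonnegative; its real roots are read off by taking square roots.
-/

open Complex Matrix

theorem Matrix.det_fin_four_of_coupled_blocks {R : Type*} [CommRing R] (a b u v c : R) :
    det !![a, u, 0, 0; v, a, c, 0; 0, c, b, u; 0, 0, v, b] =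
      (a ^ 2 - u * v) * (b ^ 2 - u * v) - c ^ 2 * a * b := by
  simp [det_succ_row_zero, Fin.sum_univ_succ, Fin.succAbove]
  ring

lemma scalar_sub_Hplus (Ω lam : ℝ) (ξ : ℝ × ℝ) (z : ℂ) :
    scalar (Fin 4) z - Hplus Ω lam ξ =
      !![z - Ω, -(ξ.1 - ξ.2 * I), 0, 0;
         -(ξ.1 + ξ.2 * I), z - Ω, -lam, 0;
         0, -lam, z + Ω, -(ξ.1 - ξ.2 * I);
         0, 0, -(ξ.1 + ξ.2 * I), z + Ω] := by
  ext i j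
  fin_cases i <;> fin_cases j <;> simp [Hplus]

lemma eval_charpoly_Hplus (Ω lam : ℝ) (ξ : ℝ × ℝ) (z : ℂ) :
    (Hplus Ω lam ξ).charpoly.eval z =
      (z ^ 2 - (Ω ^ 2 + lam ^ 2 / 2 + (ξ.1 ^ 2 + ξ.2 ^ 2))) ^ 2 -
        ((4 * Ω ^ 2 + lam ^ 2) * (ξ.1 ^ 2 + ξ.2 ^ 2) + lam ^ 4 / 4) := by
  have hξ : ((ξ.1 : ℂ) - ξ.2 * I) * (ξ.1 + ξ.2 * I) = ξ.1 ^ 2 + ξ.2 ^ 2 := by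
    linear_combination (-(ξ.2 : ℂ) ^ 2) * I_sq
  rw [eval_charpoly, scalar_sub_Hplus, det_fin_four_of_coupled_blocks, neg_mul_neg, hξ]
  ring

theorem Real.sq_eq_iff_eq_sqrt_or_eq_neg_sqrt {x y : ℝ} (hy : 0 ≤ y) :
    x ^ 2 = y ↔ x = √y ∨ x = -√y := by
  rw [← sq_eq_sq_iff_eq_or_eq_neg, Real.sq_sqrt hy]

/-- A real number `E` is an eigenvalue of `H₊(ξ)` iff
`E² = Ω² + λ²/2 + |ξ|² ± √((4Ω² + λ²)|ξ|² + λ⁴/4)`. -/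
theorem real_eigenvalue_Hplus_iff (Ω lam : ℝ) (ξ : ℝ × ℝ) (E : ℝ) :
    (E : ℂ) ∈ spectrum ℂ (Hplus Ω lam ξ) ↔
      E ^ 2 = Ω ^ 2 + lam ^ 2 / 2 + (ξ.1 ^ 2 + ξ.2 ^ 2) +
          Real.sqrt ((4 * Ω ^ 2 + lam ^ 2) * (ξ.1 ^ 2 + ξ.2 ^ 2) + lam ^ 4 / 4) ∨
      E ^ 2 = Ω ^ 2 + lam ^ 2 / 2 + (ξ.1 ^ 2 + ξ.2 ^ 2) -
          Real.sqrt ((4 * Ω ^ 2 + lam ^ 2) * (ξ.1 ^ 2 + ξ.2 ^ 2) + lam ^ 4 / 4) := by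
  have hD : 0 ≤ (4 * Ω ^ 2 + lam ^ 2) * (ξ.1 ^ 2 + ξ.2 ^ 2) + lam ^ 4 / 4 := by positivity
  rw [mem_spectrum_iff_isRoot_charpoly, Polynomial.IsRoot.def, eval_charpoly_Hplus, sub_eq_zero]
  norm_cast
  rw [Real.sq_eq_iff_eq_sqrt_or_eq_neg_sqrt hD, sub_eq_iff_eq_add', sub_eq_iff_eq_add',
    ← sub_eq_add_neg]
end

section
/- Suppose Ω ≠ 0 and λ ≠ 0. Then for every ξ ∈ ℝ², every real eigenvalue E of H₊(ξ) satisfies E² ≥ Ω²λ²/(4Ω² + λ²). In particular, setting E₀ = |Ω||λ|/√(4Ω² + λ²), the bulk Hamiltonian H₊(ξ) has no eigenvalue in the open interval (−E₀, E₀) for any ξ, i.e. the gated bulk system has a spectral gap of size 2E₀ about energy 0. -/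
open Complex Matrix

set_option maxHeartbeats 1000000 in
private theorem my_det_fin_four {R : Type*} [CommRing R] (A : Matrix (Fin 4) (Fin 4) R) :
    A.det = A 0 0 * A 1 1 * A 2 2 * A 3 3 - A 0 0 * A 1 1 * A 2 3 * A 3 2 - A 0 0 * A 1 2 * A 2 1 * A 3 3 + A 0 0 * A 1 2 * A 2 3 * A 3 1 + A 0 0 * A 1 3 * A 2 1 * A 3 2 - A 0 0 * A 1 3 * A 2 2 * A 3 1 - A 0 1 * A 1 0 * A 2 2 * A 3 3 + A 0 1 * A 1 0 * A 2 3 * A 3 2 + A 0 1 * A 1 2 * A 2 0 * A 3 3 - A 0 1 * A 1 2 * A 2 3 * A 3 0 - A 0 1 * A 1 3 * A 2 0 * A 3 2 + A 0 1 * A 1 3 * A 2 2 * A 3 0 + A 0 2 * A 1 0 * A 2 1 * A 3 3 - A 0 2 * A 1 0 * A 2 3 * A 3 1 - A 0 2 * A 1 1 * A 2 0 * A 3 3 + A 0 2 * A 1 1 * A 2 3 * A 3 0 + A 0 2 * A 1 3 * A 2 0 * A 3 1 - A 0 2 * A 1 3 * A 2 1 * A 3 0 - A 0 3 * A 1 0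 * A 2 1 * A 3 2 + A 0 3 * A 1 0 * A 2 2 * A 3 1 + A 0 3 * A 1 1 * A 2 0 * A 3 2 - A 0 3 * A 1 1 * A 2 2 * A 3 0 - A 0 3 * A 1 2 * A 2 0 * A 3 1 + A 0 3 * A 1 2 * A 2 1 * A 3 0 := by
  rw [Matrix.det_succ_row_zero, Fin.sum_univ_four]
  norm_num [Matrix.det_fin_three, Matrix.submatrix_apply, Fin.succAbove, Fin.lt_def,
    show (Fin.succ 2 : Fin 4) = 3 from rfl, show ((3:Fin 4):ℕ) = 3 from rfl,
    show (Fin.castSucc 2 : Fin 4) = 2 from rfl, show ((2:Fin 3):ℕ) = 2 from rfl,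
    show ((1:Fin 3):ℕ) = 1 from rfl, show ((0:Fin 3):ℕ) = 0 from rfl,
    show (Fin.castSucc 0 : Fin 4) = 0 from rfl, show (Fin.castSucc 1 : Fin 4) = 1 from rfl]
  ring

set_option maxHeartbeats 1000000 in
private theorem key_det (Ω lam : ℝ) (ξ : ℝ × ℝ) (E : ℝ) :
    ((E : ℂ) • (1 : Matrix (Fin 4) (Fin 4) ℂ) - Hplus Ω lam ξ).det
      = (((E^2 - Ω^2 - (ξ.1^2 + ξ.2^2))^2 - lam^2*(E^2-Ω^2) - 4*Ω^2*(ξ.1^2+ξ.2^2) : ℝ) : ℂ) := by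
  rw [my_det_fin_four]
  simp [Hplus, Matrix.smul_apply, Matrix.one_apply, Matrix.sub_apply,
    Matrix.vecHead, Matrix.vecTail]
  ring_nf
  simp only [Complex.I_sq, show (I:ℂ)^4 = 1 by rw [show (4:ℕ)=2*2 from rfl, pow_mul, Complex.I_sq]; norm_num]
  ring

/-- If `Ω ≠ 0` and `λ ≠ 0`, every real eigenvalue `E` of `H₊(ξ)` satisfies
`E² ≥ Ω²λ²/(4Ω² + λ²)`; in particular, with `E₀ = |Ω||λ|/√(4Ω² + λ²)`, the bulk
Hamiltonian has no eigenvalue in the open interval `(−E₀, E₀)` for any `ξ`: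
the gated bulk system has a spectral gap of size `2E₀` about energy `0`. -/
theorem spectral_gap_Hplus (Ω lam : ℝ) (hΩ : Ω ≠ 0) (hlam : lam ≠ 0)
    (E₀ : ℝ) (hE₀ : E₀ = |Ω| * |lam| / Real.sqrt (4 * Ω ^ 2 + lam ^ 2)) :
    (∀ ξ : ℝ × ℝ, ∀ E : ℝ, (E : ℂ) ∈ spectrum ℂ (Hplus Ω lam ξ) →
      E ^ 2 ≥ Ω ^ 2 * lam ^ 2 / (4 * Ω ^ 2 + lam ^ 2)) ∧
    (∀ ξ : ℝ × ℝ, ∀ E : ℝ, E ∈ Set.Ioo (-E₀) E₀ →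
      (E : ℂ) ∉ spectrum ℂ (Hplus Ω lam ξ)) := by
  have hΩ2 : (0:ℝ) < Ω ^ 2 := by positivity
  have hlam2 : (0:ℝ) < lam ^ 2 := by positivity
  have hden : (0:ℝ) < 4 * Ω ^ 2 + lam ^ 2 := by positivity
  have main : ∀ ξ : ℝ × ℝ, ∀ E : ℝ, (E : ℂ) ∈ spectrum ℂ (Hplus Ω lam ξ) →
      E ^ 2 ≥ Ω ^ 2 * lam ^ 2 / (4 * Ω ^ 2 + lam ^ 2) := by
    intro ξ E hE
    rw [spectrum.mem_iff] at hE
    have halg : (algebraMap ℂ (Matrix (Fin 4) (Fin 4) ℂ)) (E : ℂ)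
        = (E : ℂ) • (1 : Matrix (Fin 4) (Fin 4) ℂ) := Algebra.algebraMap_eq_smul_one _
    rw [halg] at hE
    have hdet : ((E : ℂ) • (1 : Matrix (Fin 4) (Fin 4) ℂ) - Hplus Ω lam ξ).det = 0 := by
      by_contra h
      exact hE ((Matrix.isUnit_iff_isUnit_det _).2 (isUnit_iff_ne_zero.2 h))
    rw [key_det] at hdet
    have hre : (E^2 - Ω^2 - (ξ.1^2 + ξ.2^2))^2 - lam^2*(E^2-Ω^2) - 4*Ω^2*(ξ.1^2+ξ.2^2) = 0 := by
      exact_mod_cast hdet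
    rw [ge_iff_le, div_le_iff₀ hden]
    nlinarith [sq_nonneg (ξ.1^2 + ξ.2^2 - Ω^2 - E^2), sq_nonneg ξ.1, sq_nonneg ξ.2,
      mul_pos hΩ2 hlam2, sq_nonneg E]
  refine ⟨main, ?_⟩
  intro ξ E hE hspec
  have h1 := main ξ E hspec
  have hE0pos : 0 < E₀ := by
    rw [hE₀]
    positivity
  have hE0sq : E₀ ^ 2 = Ω ^ 2 * lam ^ 2 / (4 * Ω ^ 2 + lam ^ 2) := by
    rw [hE₀, div_pow, mul_pow, Real.sq_sqrt hden.le, _root_.sq_abs, _root_.sq_abs]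
  have hlt : E ^ 2 < E₀ ^ 2 := by
    have := abs_lt.2 ⟨hE.1, hE.2⟩
    nlinarith [abs_nonneg E, _root_.sq_abs E]
  rw [hE0sq] at hlt
  linarith
end

section
/- Suppose Ω ≠ 0 and λ ≠ 0. Then for every ξ ∈ ℝ², the 4×4 Hermitian matrix H₊(ξ) has exactly four real eigenvalues, all simple, of the form −E₊(ξ) < −E₋(ξ) < 0 < E₋(ξ) < E₊(ξ), where E±(ξ) = √(Ω² + λ²/2 + |ξ|² ± √((4Ω² + λ²)|ξ|² + λ⁴/4)). -/
open Complex Matrix Polynomial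

/-!
The characteristic polynomial of `H₊(ξ)` is the biquadratic `x⁴ - 2A x² + (A² - D)` with
`A = Ω² + λ²/2 + |ξ|²` and `D = (4Ω² + λ²)|ξ|² + λ⁴/4`, so its roots are `±√(A ± √D)`.
Since `A² - D = (Ω² - |ξ|²)² + Ω²λ² > 0` and `D > 0`, we have `0 < √D < A`, which makes the
four roots real, distinct and ordered as claimed.
-/

theorem Polynomial.prod_X_sub_C_neg_X_sub_C {R : Type*} [CommRing R] (a b : R) :
    (X - C (-b)) * (X - C (-a)) * (X - C a) * (X - C b) =
      X ^ 4 - C (a ^ 2 + b ^ 2) * X ^ 2 + C (a ^ 2 * b ^ 2) := by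
  simp only [C_add, C_mul, C_pow, C_neg]
  ring

section SqrtSqrt

variable {A D : ℝ}

theorem Real.sq_sqrt_sub_sqrt_add_sq_sqrt_add_sqrt (hDA : √D ≤ A) :
    √(A - √D) ^ 2 + √(A + √D) ^ 2 = 2 * A := by
  have hD : 0 ≤ √D := Real.sqrt_nonneg D
  rw [Real.sq_sqrt (by linarith), Real.sq_sqrt (by linarith)]
  ring

theorem Real.sq_sqrt_sub_sqrt_mul_sq_sqrt_add_sqrt (hD : 0 ≤ D) (hDA : √D ≤ A) :
    √(A - √D) ^ 2 * √(A + √D) ^ 2 = A ^ 2 - D := by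
  have hD' : 0 ≤ √D := Real.sqrt_nonneg D
  rw [Real.sq_sqrt (by linarith), Real.sq_sqrt (by linarith)]
  linear_combination -Real.sq_sqrt hD

theorem Real.sqrt_sub_sqrt_pos (hDA : √D < A) : 0 < √(A - √D) :=
  Real.sqrt_pos.2 (by linarith)

theorem Real.sqrt_sub_sqrt_lt_sqrt_add_sqrt (hD : 0 < D) (hDA : √D < A) :
    √(A - √D) < √(A + √D) :=
  Real.sqrt_lt_sqrt (by linarith) (by linarith [Real.sqrt_pos.2 hD])

end SqrtSqrt

theorem Matrix.det_fin_four_tridiagonal {R : Type*} [CommRing R] (a b c d e f g h k l : R) :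
    det !![a, b, 0, 0; c, d, e, 0; 0, f, g, h; 0, 0, k, l] =
      a * d * g * l - a * d * h * k - a * e * f * l - b * c * g * l + b * c * h * k := by
  rw [det_succ_row_zero, Fin.sum_univ_four]
  simp only [Nat.succ_eq_add_one, Nat.reduceAdd, Fin.isValue, Fin.coe_ofNat_eq_mod, Nat.zero_mod,
    pow_zero, of_apply, cons_val', cons_val_zero, cons_val_fin_one, one_mul, Fin.succAbove_zero,
    det_fin_three, submatrix_apply, Fin.succ_zero_eq_one, cons_val_one, Fin.succ_one_eq_two, cons_val,
    Fin.reduceSucc, mul_zero, add_zero, zero_mul, sub_zero, Nat.one_mod, pow_one, neg_mul,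
    Fin.succAbove, Fin.castSucc_zero, zero_lt_one, reduceIte, Fin.castSucc_one, lt_self_iff_false,
    Fin.reduceCastSucc, Fin.lt_one_iff, Fin.reduceEq, Nat.reduceMod, even_two, Even.neg_pow, one_pow,
    Fin.reduceLT, Nat.mod_succ]
  ring

theorem Hplus_charpoly (Ω lam : ℝ) (ξ : ℝ × ℝ) :
    (Hplus Ω lam ξ).charpoly
      = X ^ 4 - C ((2 * Ω ^ 2 + lam ^ 2 + 2 * (ξ.1 ^ 2 + ξ.2 ^ 2) : ℝ) : ℂ) * X ^ 2
      + C (((Ω ^ 2 - (ξ.1 ^ 2 + ξ.2 ^ 2)) ^ 2 + Ω ^ 2 * lam ^ 2 : ℝ) : ℂ) := by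
  set z : ℂ := (ξ.1 : ℂ) + ξ.2 * I
  set w : ℂ := (ξ.1 : ℂ) - ξ.2 * I
  have hzw : z * w = ((ξ.1 ^ 2 + ξ.2 ^ 2 : ℝ) : ℂ) := by
    push_cast
    linear_combination (-(ξ.2 : ℂ) ^ 2) * I_sq
  have hcharmatrix : charmatrix (Hplus Ω lam ξ) =
      !![X - C (Ω : ℂ), -C w, 0, 0;
         -C z, X - C (Ω : ℂ), -C (lam : ℂ), 0;
         0, -C (lam : ℂ), X + C (Ω : ℂ), -C w;
         0, 0, -C z, X + C (Ω : ℂ)] := by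
    ext i j
    fin_cases i <;> fin_cases j <;> simp [Hplus, z, w]
  have hexpand : (Hplus Ω lam ξ).charpoly
      = X ^ 4 - C (2 * (Ω : ℂ) ^ 2 + (lam : ℂ) ^ 2 + 2 * (z * w)) * X ^ 2
      + C (((Ω : ℂ) ^ 2 - z * w) ^ 2 + (Ω : ℂ) ^ 2 * (lam : ℂ) ^ 2) := by
    rw [Matrix.charpoly, hcharmatrix, det_fin_four_tridiagonal]
    simp only [C_add, C_sub, C_mul, C_pow, C_ofNat]
    ring
  rw [hexpand, hzw]
  norm_cast

/-- For `Ω ≠ 0`, `λ ≠ 0`, the matrix `H₊(ξ)` has exactly four real eigenvalues, all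
simple (its characteristic polynomial splits into four distinct linear factors), of
the form `−E₊(ξ) < −E₋(ξ) < 0 < E₋(ξ) < E₊(ξ)` with
`E±(ξ) = √(Ω² + λ²/2 + |ξ|² ± √((4Ω² + λ²)|ξ|² + λ⁴/4))`. -/
theorem Hplus_four_simple_eigenvalues (Ω lam : ℝ) (hΩ : Ω ≠ 0) (hlam : lam ≠ 0)
    (ξ : ℝ × ℝ) (Em Ep : ℝ)
    (hEm : Em = Real.sqrt (Ω ^ 2 + lam ^ 2 / 2 + (ξ.1 ^ 2 + ξ.2 ^ 2) -
      Real.sqrt ((4 * Ω ^ 2 + lam ^ 2) * (ξ.1 ^ 2 + ξ.2 ^ 2) + lam ^ 4 / 4)))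
    (hEp : Ep = Real.sqrt (Ω ^ 2 + lam ^ 2 / 2 + (ξ.1 ^ 2 + ξ.2 ^ 2) +
      Real.sqrt ((4 * Ω ^ 2 + lam ^ 2) * (ξ.1 ^ 2 + ξ.2 ^ 2) + lam ^ 4 / 4))) :
    spectrum ℂ (Hplus Ω lam ξ) = {(-Ep : ℂ), (-Em : ℂ), (Em : ℂ), (Ep : ℂ)} ∧
    (Hplus Ω lam ξ).charpoly =
      (X - C (-Ep : ℂ)) * (X - C (-Em : ℂ)) * (X - C (Em : ℂ)) * (X - C (Ep : ℂ)) ∧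
    0 < Em ∧ Em < Ep := by
  set r := ξ.1 ^ 2 + ξ.2 ^ 2
  set A := Ω ^ 2 + lam ^ 2 / 2 + r
  set D := (4 * Ω ^ 2 + lam ^ 2) * r + lam ^ 4 / 4
  have hD : 0 < D := by positivity
  have hDA : √D < A := by
    have hdisc : A ^ 2 - D = (Ω ^ 2 - r) ^ 2 + Ω ^ 2 * lam ^ 2 := by ring
    have hΩlam : 0 < Ω ^ 2 * lam ^ 2 := by positivity
    rw [Real.sqrt_lt' (by positivity)]
    linarith [sq_nonneg (Ω ^ 2 - r)]
  have hsum := Real.sq_sqrt_sub_sqrt_add_sq_sqrt_add_sqrt hDA.le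
  have hprod := Real.sq_sqrt_sub_sqrt_mul_sq_sqrt_add_sqrt hD.le hDA.le
  rw [← hEm, ← hEp] at hsum hprod
  have hchar : (Hplus Ω lam ξ).charpoly =
      (X - C (-Ep : ℂ)) * (X - C (-Em : ℂ)) * (X - C (Em : ℂ)) * (X - C (Ep : ℂ)) := by
    have htrace : 2 * Ω ^ 2 + lam ^ 2 + 2 * r = Em ^ 2 + Ep ^ 2 := by rw [hsum]; ring
    have hdet : (Ω ^ 2 - r) ^ 2 + Ω ^ 2 * lam ^ 2 = Em ^ 2 * Ep ^ 2 := by rw [hprod]; ring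
    rw [Polynomial.prod_X_sub_C_neg_X_sub_C, Hplus_charpoly, htrace, hdet]
    norm_cast
  refine ⟨?_, hchar, hEm ▸ Real.sqrt_sub_sqrt_pos hDA,
    hEm ▸ hEp ▸ Real.sqrt_sub_sqrt_lt_sqrt_add_sqrt hD hDA⟩
  ext x
  simp [Matrix.mem_spectrum_iff_isRoot_charpoly, hchar, sub_eq_zero, add_eq_zero_iff_eq_neg, or_assoc]
end

section
/- Let Ω, λ ∈ ℝ, ξ ∈ ℝ² and let E ∈ ℝ satisfy the characteristic equation (|ξ|² − (E−Ω)²)(|ξ|² − (E+Ω)²) = λ²(E² − Ω²). Set P = (Ω + E)² − |ξ|² and define the vector w = (conj(ξ)·P, (E−Ω)·P, λ(E² − Ω²), λξ(E−Ω)) ∈ ℂ⁴. Then H₊(ξ)·w = E·w, i.e. w is an eigenvector (possibly zero) of H₊(ξ) with eigenvalue E. -/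
open Complex Matrix

/-- If a real energy `E` satisfies the characteristic equation
`(|ξ|² − (E−Ω)²)(|ξ|² − (E+Ω)²) = λ²(E² − Ω²)`, then with `P = (Ω + E)² − |ξ|²` the
vector `w = (conj(ξ)·P, (E−Ω)·P, λ(E² − Ω²), λξ(E−Ω))` satisfies `H₊(ξ)·w = E·w`,
i.e. `w` is an eigenvector (possibly zero) of `H₊(ξ)` with eigenvalue `E`. -/
theorem Hplus_explicit_eigenvector (Ω lam : ℝ) (ξ : ℝ × ℝ) (E : ℝ)
    (hchar : ((ξ.1 ^ 2 + ξ.2 ^ 2) - (E - Ω) ^ 2) * ((ξ.1 ^ 2 + ξ.2 ^ 2) - (E + Ω) ^ 2) =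
      lam ^ 2 * (E ^ 2 - Ω ^ 2))
    (P : ℝ) (hP : P = (Ω + E) ^ 2 - (ξ.1 ^ 2 + ξ.2 ^ 2))
    (w : Fin 4 → ℂ)
    (hw : w = ![((ξ.1 : ℂ) - (ξ.2 : ℂ) * I) * (P : ℂ),
      ((E - Ω : ℝ) : ℂ) * (P : ℂ),
      ((lam * (E ^ 2 - Ω ^ 2) : ℝ) : ℂ),
      (lam : ℂ) * ((ξ.1 : ℂ) + (ξ.2 : ℂ) * I) * ((E - Ω : ℝ) : ℂ)]) :
    (Hplus Ω lam ξ).mulVec w = (E : ℂ) • w := by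
  have hcharC : (((ξ.1:ℂ) ^ 2 + (ξ.2:ℂ) ^ 2) - ((E:ℂ) - Ω) ^ 2) *
      (((ξ.1:ℂ) ^ 2 + (ξ.2:ℂ) ^ 2) - ((E:ℂ) + Ω) ^ 2) =
      (lam:ℂ) ^ 2 * ((E:ℂ) ^ 2 - (Ω:ℂ) ^ 2) := by
    exact_mod_cast congrArg (Complex.ofReal) hchar
  have hPC : (P : ℂ) = ((Ω:ℂ) + E) ^ 2 - ((ξ.1:ℂ) ^ 2 + (ξ.2:ℂ) ^ 2) := by
    exact_mod_cast congrArg (Complex.ofReal) hP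
  subst hw
  funext i
  fin_cases i <;>
  · simp [Hplus, mulVec, dotProduct, Fin.sum_univ_four, hPC]
    ring_nf
    try simp only [Complex.I_sq]
    try ring
    try linear_combination -hcharC
    try linear_combination hcharC
end

section
/- Let Ω > 0 and λ ≠ 0 be real, β = 2Ω + √(4Ω² + λ²), c = (2λ² + 2β²)^{-1/2}, and define the smooth curves u⁴, u³ : [0, 2π] → ℂ⁴ by u⁴(θ) = c·(β e^{−iθ}, β, λ, λ e^{iθ}) and u³(θ) = c·(λ, λ e^{iθ}, −β e^{iθ}, −β e^{2iθ}) (the large-momentum limits of the normalized fourth- and third-band eigenvectors of the AB-stacked bulk Hamiltonian). Then the Berry-phase integrals satisfy (i/2π)∫₀^{2π} ⟨u⁴(θ), (u⁴)′(θ)⟩ dθ = (β² − λ²)/(2(λ² + β²)) and (i/2π)∫₀^{2π} ⟨u³(θ), (u³)′(θ)⟩ dθ = −(λ² + 3β²)/(2(λ² + β²)); in particular their sum equals −1. -/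
/-!
Every component of `u⁴` and `u³` is a single Fourier mode `a e^{inθ}`, for which
`conj (a e^{inθ}) · (a e^{inθ})′ = i n |a|²` is constant in `θ`. Hence the Berry integral of
a curve of modes is `-∑ n_j |a_j|²`. The winding numbers are `(-1, 0, 0, 1)` for `u⁴` and
`(0, 1, 1, 2)` for `u³`, and `c² = 1 / (2(λ² + β²))`, which gives both values; they add up
to `-(2λ² + 2β²) / (2(λ² + β²)) = -1`.
-/

open Complex

noncomputable def berryIntegral {ι : Type*} [Fintype ι] (u : ℝ → ι → ℂ) : ℂ :=
  (I / (2 * Real.pi)) * ∫ θ in (0 : ℝ)..(2 * Real.pi),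
    ∑ j, (starRingEnd ℂ) (u θ j) * deriv (fun t : ℝ => u t j) θ

lemma deriv_mul_exp_ofReal_mul_I (a : ℂ) (n θ : ℝ) :
    deriv (fun t : ℝ => a * exp (n * I * t)) θ = n * I * (a * exp (n * I * θ)) := by
  have h := ((hasDerivAt_id θ).ofReal_comp.const_mul ((n : ℂ) * I)).cexp.const_mul a
  simp only [id_eq, ofReal_one, mul_one] at h
  rw [h.deriv]; ring

lemma conj_mul_deriv_mul_exp (a : ℂ) (n θ : ℝ) :
    (starRingEnd ℂ) (a * exp (n * I * θ)) * deriv (fun t : ℝ => a * exp (n * I * t)) θ =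
      I * (n * normSq a) := by
  have h_unit : (starRingEnd ℂ) (exp (n * I * θ)) * exp (n * I * θ) = 1 := by
    rw [conj_mul', show (n : ℂ) * I * θ = (n * θ : ℝ) * I by push_cast; ring,
      norm_exp_ofReal_mul_I]
    simp
  rw [deriv_mul_exp_ofReal_mul_I, map_mul, normSq_eq_conj_mul_self]
  linear_combination (n * I * (starRingEnd ℂ) a * a) * h_unit

theorem berryIntegral_modes {ι : Type*} [Fintype ι] (a : ι → ℂ) (n : ι → ℝ) :
    berryIntegral (fun θ j => a j * exp (n j * I * θ)) =
      ((-∑ j, n j * normSq (a j) : ℝ) : ℂ) := by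
  have hπ : (Real.pi : ℂ) ≠ 0 := ofReal_ne_zero.mpr Real.pi_ne_zero
  simp only [berryIntegral, conj_mul_deriv_mul_exp, ← Finset.mul_sum,
    intervalIntegral.integral_const, sub_zero, real_smul]
  push_cast
  field_simp
  linear_combination (∑ j, (n j : ℂ) * (normSq (a j) : ℂ)) * I_sq

theorem berry_integrals_AB_general (lam β c : ℝ) (hlam : lam ≠ 0)
    (hc : c = (Real.sqrt (2 * lam ^ 2 + 2 * β ^ 2))⁻¹)
    (u4 u3 : ℝ → Fin 4 → ℂ)
    (hu4 : ∀ θ : ℝ, u4 θ = ![((c * β : ℝ) : ℂ) * Complex.exp (-Complex.I * θ),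
      ((c * β : ℝ) : ℂ), ((c * lam : ℝ) : ℂ),
      ((c * lam : ℝ) : ℂ) * Complex.exp (Complex.I * θ)])
    (hu3 : ∀ θ : ℝ, u3 θ = ![((c * lam : ℝ) : ℂ),
      ((c * lam : ℝ) : ℂ) * Complex.exp (Complex.I * θ),
      -((c * β : ℝ) : ℂ) * Complex.exp (Complex.I * θ),
      -((c * β : ℝ) : ℂ) * Complex.exp (2 * Complex.I * θ)]) :
    (Complex.I / (2 * Real.pi)) * ∫ θ in (0 : ℝ)..(2 * Real.pi),
        ∑ j : Fin 4, (starRingEnd ℂ) (u4 θ j) * deriv (fun t : ℝ => u4 t j) θ =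
      (((β ^ 2 - lam ^ 2) / (2 * (lam ^ 2 + β ^ 2)) : ℝ) : ℂ) ∧
    (Complex.I / (2 * Real.pi)) * ∫ θ in (0 : ℝ)..(2 * Real.pi),
        ∑ j : Fin 4, (starRingEnd ℂ) (u3 θ j) * deriv (fun t : ℝ => u3 t j) θ =
      -(((lam ^ 2 + 3 * β ^ 2) / (2 * (lam ^ 2 + β ^ 2)) : ℝ) : ℂ) ∧
    ((Complex.I / (2 * Real.pi)) * ∫ θ in (0 : ℝ)..(2 * Real.pi),
        ∑ j : Fin 4, (starRingEnd ℂ) (u4 θ j) * deriv (fun t : ℝ => u4 t j) θ) +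
      ((Complex.I / (2 * Real.pi)) * ∫ θ in (0 : ℝ)..(2 * Real.pi),
        ∑ j : Fin 4, (starRingEnd ℂ) (u3 θ j) * deriv (fun t : ℝ => u3 t j) θ) = -1 := by
  have hc_sq : c ^ 2 = (2 * (lam ^ 2 + β ^ 2))⁻¹ := by
    rw [hc, inv_pow, Real.sq_sqrt (by positivity)]; ring
  have hu4_modes : u4 = fun (θ : ℝ) j =>
      ((![c * β, c * β, c * lam, c * lam] j : ℝ) : ℂ) *
        exp ((![-1, 0, 0, 1] j : ℝ) * I * θ) := by
    funext θ j
    fin_cases j <;> simp [hu4]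
  have hu3_modes : u3 = fun (θ : ℝ) j =>
      ((![c * lam, c * lam, -(c * β), -(c * β)] j : ℝ) : ℂ) *
        exp ((![0, 1, 1, 2] j : ℝ) * I * θ) := by
    funext θ j
    fin_cases j <;> simp [hu3]
  have hW4 : berryIntegral u4 = (((β ^ 2 - lam ^ 2) / (2 * (lam ^ 2 + β ^ 2)) : ℝ) : ℂ) := by
    rw [hu4_modes, berryIntegral_modes]
    simp [Fin.sum_univ_four, div_eq_mul_inv, ← hc_sq]
    ring
  have hW3 :
      berryIntegral u3 = -(((lam ^ 2 + 3 * β ^ 2) / (2 * (lam ^ 2 + β ^ 2)) : ℝ) : ℂ) := by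
    rw [hu3_modes, berryIntegral_modes]
    simp [Fin.sum_univ_four, div_eq_mul_inv, ← hc_sq]
    ring
  refine ⟨hW4, hW3, ?_⟩
  change berryIntegral u4 + berryIntegral u3 = -1
  have hs : lam ^ 2 + β ^ 2 ≠ 0 := by positivity
  have h_sum : (β ^ 2 - lam ^ 2) / (2 * (lam ^ 2 + β ^ 2)) -
      (lam ^ 2 + 3 * β ^ 2) / (2 * (lam ^ 2 + β ^ 2)) = -1 := by
    field_simp
    ring
  rw [hW4, hW3, ← sub_eq_add_neg]
  exact_mod_cast h_sum

/-- Berry-phase circle integrals of the large-momentum limits of the normalized fourth-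
and third-band eigenvectors of the AB-stacked gated bilayer bulk Hamiltonian:
with `β = 2Ω + √(4Ω² + λ²)` and `c = (2λ² + 2β²)^{-1/2}`,
`(i/2π)∫₀^{2π} ⟨u⁴, (u⁴)′⟩ dθ = (β² − λ²)/(2(λ² + β²))`,
`(i/2π)∫₀^{2π} ⟨u³, (u³)′⟩ dθ = −(λ² + 3β²)/(2(λ² + β²))`, and their sum is `−1`. -/
theorem berry_integrals_AB (Ω lam β c : ℝ) (hΩ : 0 < Ω) (hlam : lam ≠ 0)
    (hβ : β = 2 * Ω + Real.sqrt (4 * Ω ^ 2 + lam ^ 2))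
    (hc : c = (Real.sqrt (2 * lam ^ 2 + 2 * β ^ 2))⁻¹)
    (u4 u3 : ℝ → Fin 4 → ℂ)
    (hu4 : ∀ θ : ℝ, u4 θ = ![((c * β : ℝ) : ℂ) * Complex.exp (-Complex.I * θ),
      ((c * β : ℝ) : ℂ), ((c * lam : ℝ) : ℂ),
      ((c * lam : ℝ) : ℂ) * Complex.exp (Complex.I * θ)])
    (hu3 : ∀ θ : ℝ, u3 θ = ![((c * lam : ℝ) : ℂ),
      ((c * lam : ℝ) : ℂ) * Complex.exp (Complex.I * θ),
      -((c * β : ℝ) : ℂ) * Complex.exp (Complex.I * θ),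
      -((c * β : ℝ) : ℂ) * Complex.exp (2 * Complex.I * θ)]) :
    (Complex.I / (2 * Real.pi)) * ∫ θ in (0 : ℝ)..(2 * Real.pi),
        ∑ j : Fin 4, (starRingEnd ℂ) (u4 θ j) * deriv (fun t : ℝ => u4 t j) θ =
      (((β ^ 2 - lam ^ 2) / (2 * (lam ^ 2 + β ^ 2)) : ℝ) : ℂ) ∧
    (Complex.I / (2 * Real.pi)) * ∫ θ in (0 : ℝ)..(2 * Real.pi),
        ∑ j : Fin 4, (starRingEnd ℂ) (u3 θ j) * deriv (fun t : ℝ => u3 t j) θ =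
      -(((lam ^ 2 + 3 * β ^ 2) / (2 * (lam ^ 2 + β ^ 2)) : ℝ) : ℂ) ∧
    ((Complex.I / (2 * Real.pi)) * ∫ θ in (0 : ℝ)..(2 * Real.pi),
        ∑ j : Fin 4, (starRingEnd ℂ) (u4 θ j) * deriv (fun t : ℝ => u4 t j) θ) +
      ((Complex.I / (2 * Real.pi)) * ∫ θ in (0 : ℝ)..(2 * Real.pi),
        ∑ j : Fin 4, (starRingEnd ℂ) (u3 θ j) * deriv (fun t : ℝ => u3 t j) θ) = -1 :=
  berry_integrals_AB_general lam β c hlam hc u4 u3 hu4 hu3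
end

section
/- Let Ω > 0 and λ ≠ 0 be real, β = 2Ω + √(4Ω² + λ²), c = (2λ² + 2β²)^{-1/2}, and define the smooth curves v⁴, v³ : [0, 2π] → ℂ⁴ by v⁴(θ) = c·(β, β e^{iθ}, λ e^{−iθ}, λ) and v³(θ) = c·(λ e^{−iθ}, λ, −β e^{−2iθ}, −β e^{−iθ}) (the large-momentum limits of the normalized fourth- and third-band eigenvectors of the BA-stacked bulk Hamiltonian). Then (i/2π)∫₀^{2π} ⟨v⁴(θ), (v⁴)′(θ)⟩ dθ = (λ² − β²)/(2(λ² + β²)) and (i/2π)∫₀^{2π} ⟨v³(θ), (v³)′(θ)⟩ dθ = (λ² + 3β²)/(2(λ² + β²)); in particular their sum equals +1. -/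
open Complex

lemma term_eval (a : ℝ) (k : ℂ) (hk : (starRingEnd ℂ) k = -k) (θ : ℝ) :
    (starRingEnd ℂ) ((a : ℂ) * Complex.exp (k * θ)) *
      deriv (fun t : ℝ => (a : ℂ) * Complex.exp (k * t)) θ = (a : ℂ) ^ 2 * k := by
  have h1 : HasDerivAt (fun t : ℝ => k * (t : ℂ)) k θ := by
    simpa using (Complex.ofRealCLM.hasDerivAt (x := θ)).const_mul k
  have h2 : HasDerivAt (fun t : ℝ => (a : ℂ) * Complex.exp (k * t))
      ((a : ℂ) * (Complex.exp (k * θ) * k)) θ := (h1.cexp).const_mul _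
  rw [h2.deriv, map_mul, Complex.conj_ofReal, ← Complex.exp_conj, map_mul, hk,
    Complex.conj_ofReal]
  rw [show -k * (θ:ℂ) = -(k*θ) by ring, Complex.exp_neg]
  have := Complex.exp_ne_zero (k * θ)
  field_simp

lemma term_eval_neg (a : ℝ) (k : ℂ) (hk : (starRingEnd ℂ) k = -k) (θ : ℝ) :
    (starRingEnd ℂ) (-(a : ℂ) * Complex.exp (k * θ)) *
      deriv (fun t : ℝ => -(a : ℂ) * Complex.exp (k * t)) θ = (a : ℂ) ^ 2 * k := by
  have h := term_eval (-a) k hk θ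
  push_cast at h
  rw [h]; ring

/-- Berry-phase circle integrals of the large-momentum limits of the normalized fourth-
and third-band eigenvectors of the BA-stacked gated bilayer bulk Hamiltonian:
with `β = 2Ω + √(4Ω² + λ²)` and `c = (2λ² + 2β²)^{-1/2}`,
`(i/2π)∫₀^{2π} ⟨v⁴, (v⁴)′⟩ dθ = (λ² − β²)/(2(λ² + β²))`,
`(i/2π)∫₀^{2π} ⟨v³, (v³)′⟩ dθ = (λ² + 3β²)/(2(λ² + β²))`, and their sum is `+1`. -/
theorem berry_integrals_BA (Ω lam β c : ℝ) (hΩ : 0 < Ω) (hlam : lam ≠ 0)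
    (hβ : β = 2 * Ω + Real.sqrt (4 * Ω ^ 2 + lam ^ 2))
    (hc : c = (Real.sqrt (2 * lam ^ 2 + 2 * β ^ 2))⁻¹)
    (v4 v3 : ℝ → Fin 4 → ℂ)
    (hv4 : ∀ θ : ℝ, v4 θ = ![((c * β : ℝ) : ℂ),
      ((c * β : ℝ) : ℂ) * Complex.exp (Complex.I * θ),
      ((c * lam : ℝ) : ℂ) * Complex.exp (-Complex.I * θ),
      ((c * lam : ℝ) : ℂ)])
    (hv3 : ∀ θ : ℝ, v3 θ = ![((c * lam : ℝ) : ℂ) * Complex.exp (-Complex.I * θ),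
      ((c * lam : ℝ) : ℂ),
      -((c * β : ℝ) : ℂ) * Complex.exp (-2 * Complex.I * θ),
      -((c * β : ℝ) : ℂ) * Complex.exp (-Complex.I * θ)]) :
    (Complex.I / (2 * Real.pi)) * ∫ θ in (0 : ℝ)..(2 * Real.pi),
        ∑ j : Fin 4, (starRingEnd ℂ) (v4 θ j) * deriv (fun t : ℝ => v4 t j) θ =
      (((lam ^ 2 - β ^ 2) / (2 * (lam ^ 2 + β ^ 2)) : ℝ) : ℂ) ∧
    (Complex.I / (2 * Real.pi)) * ∫ θ in (0 : ℝ)..(2 * Real.pi),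
        ∑ j : Fin 4, (starRingEnd ℂ) (v3 θ j) * deriv (fun t : ℝ => v3 t j) θ =
      (((lam ^ 2 + 3 * β ^ 2) / (2 * (lam ^ 2 + β ^ 2)) : ℝ) : ℂ) ∧
    ((Complex.I / (2 * Real.pi)) * ∫ θ in (0 : ℝ)..(2 * Real.pi),
        ∑ j : Fin 4, (starRingEnd ℂ) (v4 θ j) * deriv (fun t : ℝ => v4 t j) θ) +
      ((Complex.I / (2 * Real.pi)) * ∫ θ in (0 : ℝ)..(2 * Real.pi),
        ∑ j : Fin 4, (starRingEnd ℂ) (v3 θ j) * deriv (fun t : ℝ => v3 t j) θ) = 1 := by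
  have hs : (0:ℝ) < 2 * lam ^ 2 + 2 * β ^ 2 := by positivity
  have hc2 : (c : ℝ) ^ 2 = (2 * lam ^ 2 + 2 * β ^ 2)⁻¹ := by
    rw [hc, ← Real.sqrt_inv, Real.sq_sqrt (by positivity)]
  have hπ : (Real.pi : ℝ) ≠ 0 := Real.pi_ne_zero
  have hI : (starRingEnd ℂ) Complex.I = -Complex.I := Complex.conj_I
  have hmI : (starRingEnd ℂ) (-Complex.I) = -(-Complex.I) := by simp
  have hm2I : (starRingEnd ℂ) (-2 * Complex.I) = -(-2 * Complex.I) := by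
    rw [show (-2 * Complex.I) = ((-2:ℝ):ℂ) * Complex.I by norm_num, map_mul,
      Complex.conj_ofReal, Complex.conj_I]; ring
  have key4 : ∀ θ : ℝ,
      ∑ j : Fin 4, (starRingEnd ℂ) (v4 θ j) * deriv (fun t : ℝ => v4 t j) θ =
      ((c*β:ℝ):ℂ)^2 * Complex.I + ((c*lam:ℝ):ℂ)^2 * (-Complex.I) := by
    intro θ
    simp only [hv4, Fin.sum_univ_four, Matrix.cons_val_zero, Matrix.cons_val_one,
      Matrix.head_cons, Matrix.cons_val_two, Matrix.tail_cons, Matrix.cons_val_three]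
    rw [term_eval _ _ hI, term_eval _ _ hmI, deriv_const, deriv_const]
    ring
  have key3 : ∀ θ : ℝ,
      ∑ j : Fin 4, (starRingEnd ℂ) (v3 θ j) * deriv (fun t : ℝ => v3 t j) θ =
      ((c*lam:ℝ):ℂ)^2 * (-Complex.I) + ((c*β:ℝ):ℂ)^2 * (-2*Complex.I)
        + ((c*β:ℝ):ℂ)^2 * (-Complex.I) := by
    intro θ
    simp only [hv3, Fin.sum_univ_four, Matrix.cons_val_zero, Matrix.cons_val_one,
      Matrix.head_cons, Matrix.cons_val_two, Matrix.tail_cons, Matrix.cons_val_three]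
    rw [term_eval _ _ hmI, term_eval_neg _ _ hm2I, term_eval_neg _ _ hmI, deriv_const]
    ring
  have int4 : (∫ θ in (0:ℝ)..(2*Real.pi),
      ∑ j : Fin 4, (starRingEnd ℂ) (v4 θ j) * deriv (fun t : ℝ => v4 t j) θ) =
      (2*Real.pi : ℝ) • (((c*β:ℝ):ℂ)^2 * Complex.I + ((c*lam:ℝ):ℂ)^2 * (-Complex.I)) := by
    rw [intervalIntegral.integral_congr (g := fun _ =>
      ((c*β:ℝ):ℂ)^2 * Complex.I + ((c*lam:ℝ):ℂ)^2 * (-Complex.I))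
      (fun θ _ => key4 θ), intervalIntegral.integral_const, sub_zero]
  have int3 : (∫ θ in (0:ℝ)..(2*Real.pi),
      ∑ j : Fin 4, (starRingEnd ℂ) (v3 θ j) * deriv (fun t : ℝ => v3 t j) θ) =
      (2*Real.pi : ℝ) • (((c*lam:ℝ):ℂ)^2 * (-Complex.I) + ((c*β:ℝ):ℂ)^2 * (-2*Complex.I)
        + ((c*β:ℝ):ℂ)^2 * (-Complex.I)) := by
    rw [intervalIntegral.integral_congr (g := fun _ =>
      ((c*lam:ℝ):ℂ)^2 * (-Complex.I) + ((c*β:ℝ):ℂ)^2 * (-2*Complex.I)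
        + ((c*β:ℝ):ℂ)^2 * (-Complex.I)) (fun θ _ => key3 θ),
      intervalIntegral.integral_const, sub_zero]
  have hπc : ((Real.pi : ℝ) : ℂ) ≠ 0 := by exact_mod_cast hπ
  have cancel : ∀ z : ℂ,
      (Complex.I / (2 * Real.pi)) * ((2 * Real.pi : ℝ) • z) = Complex.I * z := by
    intro z
    rw [Complex.real_smul]
    push_cast
    field_simp
  have hd : (2 * (lam ^ 2 + β ^ 2) : ℝ) ≠ 0 := by positivity
  have hr4 : ((lam ^ 2 - β ^ 2) / (2 * (lam ^ 2 + β ^ 2)) : ℝ)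
      = (c * lam) ^ 2 - (c * β) ^ 2 := by
    have : (c * lam) ^ 2 - (c * β) ^ 2 = c ^ 2 * (lam ^ 2 - β ^ 2) := by ring
    rw [this, hc2, inv_mul_eq_div, div_eq_div_iff (by positivity) (by positivity)]
    ring
  have hr3 : ((lam ^ 2 + 3 * β ^ 2) / (2 * (lam ^ 2 + β ^ 2)) : ℝ)
      = (c * lam) ^ 2 + 3 * (c * β) ^ 2 := by
    have : (c * lam) ^ 2 + 3 * (c * β) ^ 2 = c ^ 2 * (lam ^ 2 + 3 * β ^ 2) := by ring
    rw [this, hc2, inv_mul_eq_div, div_eq_div_iff (by positivity) (by positivity)]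
    ring
  have e4 : (Complex.I / (2 * Real.pi)) * (∫ θ in (0:ℝ)..(2*Real.pi),
      ∑ j : Fin 4, (starRingEnd ℂ) (v4 θ j) * deriv (fun t : ℝ => v4 t j) θ) =
      (((lam ^ 2 - β ^ 2) / (2 * (lam ^ 2 + β ^ 2)) : ℝ) : ℂ) := by
    rw [int4, cancel, hr4]
    push_cast
    linear_combination (((c:ℂ) * β) ^ 2 - ((c:ℂ) * lam) ^ 2) * Complex.I_sq
  have e3 : (Complex.I / (2 * Real.pi)) * (∫ θ in (0:ℝ)..(2*Real.pi),
      ∑ j : Fin 4, (starRingEnd ℂ) (v3 θ j) * deriv (fun t : ℝ => v3 t j) θ) =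
      (((lam ^ 2 + 3 * β ^ 2) / (2 * (lam ^ 2 + β ^ 2)) : ℝ) : ℂ) := by
    rw [int3, cancel, hr3]
    push_cast
    linear_combination (-(((c:ℂ) * lam) ^ 2 + 3 * ((c:ℂ) * β) ^ 2)) * Complex.I_sq
  refine ⟨e4, e3, ?_⟩
  rw [e4, e3, ← Complex.ofReal_add]
  rw [show ((lam ^ 2 - β ^ 2) / (2 * (lam ^ 2 + β ^ 2)) +
      (lam ^ 2 + 3 * β ^ 2) / (2 * (lam ^ 2 + β ^ 2)) : ℝ) = 1 by field_simp; ring]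
  norm_num
end

section
/- Let Sᴸ = [[R₊ᴸ, T₋ᴸ], [T₊ᴸ, R₋ᴸ]] be a unitary 2×2 complex matrix, write R = R₋ᴸ and r = |R|, and assume R² ≠ 1. In the symmetric-potential setting where R₊ᴿ = R and T₋ᴿ = T₊ᴸ, the right-moving valley conductivity satisfies σ_I⁺ := |T₊ᴸ|²·(1 + r²)/|1 − R²|² = (1 − r⁴)/|1 − R²|². In particular, writing R = r e^{iθ}, for small r one has σ_I⁺ = 1 + 2 cos(2θ)·r² + O(r⁴), so the local conductivity can either decrease (θ = π/2) or increase (θ = 0) under a weak valley-coupling perturbation. -/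
open Complex Matrix Filter Asymptotics

/-!
Unitarity of `Sᴸ` makes its second row a unit vector, `|T₊ᴸ|² + r² = 1`, so
`|T₊ᴸ|²(1 + r²) = (1 - r²)(1 + r²) = 1 - r⁴`. For `R = r e^{iθ}` the denominator is
`|1 - R²|² = 1 - 2 cos(2θ) r² + r⁴`, and
`(1 - r⁴)/|1 - R²|² - (1 + 2 cos(2θ) r²)` equals `r⁴` times
`(4 cos²(2θ) - 2 - 2 cos(2θ) r²) / |1 - R²|²`, which is continuous at `r = 0` and hence
bounded near it.
-/

theorem Matrix.sum_norm_sq_row_of_mem_unitaryGroup {𝕜 n : Type*} [RCLike 𝕜] [Fintype n]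
    [DecidableEq n] {U : Matrix n n 𝕜} (hU : U ∈ unitaryGroup n 𝕜) (i : n) :
    ∑ j, ‖U i j‖ ^ 2 = 1 := by
  have hdiag : (U * Uᴴ) i i = 1 := by
    rw [← star_eq_conjTranspose, mem_unitaryGroup_iff.mp hU, one_apply_eq]
  simp only [mul_apply, conjTranspose_apply, RCLike.star_def, RCLike.mul_conj] at hdiag
  exact_mod_cast hdiag

theorem Complex.norm_sq_one_sub_sq_ofReal_mul_exp (r θ : ℝ) :
    ‖1 - ((r : ℂ) * exp (I * θ)) ^ 2‖ ^ 2 = 1 - 2 * Real.cos (2 * θ) * r ^ 2 + r ^ 4 := by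
  have hsq : ((r : ℂ) * exp (I * θ)) ^ 2 =
      ((r ^ 2 : ℝ) : ℂ) * (Real.cos (2 * θ) + Real.sin (2 * θ) * I) := by
    push_cast
    rw [mul_pow, ← exp_nat_mul, ← exp_mul_I]
    ring_nf
  rw [hsq, Complex.sq_norm, normSq_apply]
  simp only [sub_re, sub_im, one_re, one_im, mul_re, mul_im, add_re, add_im, ofReal_re,
    ofReal_im, I_re, I_im]
  linear_combination r ^ 4 * Real.sin_sq_add_cos_sq (2 * θ)

theorem isBigO_div_sub_expansion (c : ℝ) :
    (fun r : ℝ => (1 - r ^ 4) / (1 - 2 * c * r ^ 2 + r ^ 4) - (1 + 2 * c * r ^ 2))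
      =O[nhds 0] fun r : ℝ => r ^ 4 := by
  have hD : ContinuousAt (fun r : ℝ => 1 - 2 * c * r ^ 2 + r ^ 4) 0 := by fun_prop
  have hD0 : 1 - 2 * c * 0 ^ 2 + 0 ^ 4 ≠ (0 : ℝ) := by norm_num
  have hcofactor : (fun r : ℝ => (4 * c ^ 2 - 2 - 2 * c * r ^ 2) / (1 - 2 * c * r ^ 2 + r ^ 4))
      =O[nhds 0] (fun _ => (1 : ℝ)) :=
    ((ContinuousAt.div (by fun_prop) hD hD0).tendsto).isBigO_one ℝ
  refine (hcofactor.mul (isBigO_refl (fun r : ℝ => r ^ 4) _)).congr' ?_ (by simp)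
  filter_upwards [hD.eventually_ne hD0] with r hr
  rw [div_mul_eq_mul_div, div_sub' hr]
  ring

theorem symmetric_valley_conductivity_general (Sl : Matrix (Fin 2) (Fin 2) ℂ)
    (hSl : Sl ∈ Matrix.unitaryGroup (Fin 2) ℂ) :
    ‖Sl 1 0‖ ^ 2 * (1 + ‖Sl 1 1‖ ^ 2) /
        ‖1 - Sl 1 1 ^ 2‖ ^ 2 =
      (1 - ‖Sl 1 1‖ ^ 4) / ‖1 - Sl 1 1 ^ 2‖ ^ 2 ∧
    ∀ θ : ℝ,
      (fun r : ℝ =>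
          (1 - r ^ 4) / ‖1 - ((r : ℂ) * Complex.exp (Complex.I * θ)) ^ 2‖ ^ 2 -
            (1 + 2 * Real.cos (2 * θ) * r ^ 2)) =O[nhds (0 : ℝ)]
        (fun r : ℝ => r ^ 4) := by
  refine ⟨?_, fun θ => ?_⟩
  · have hrow : ‖Sl 1 0‖ ^ 2 + ‖Sl 1 1‖ ^ 2 = 1 := by
      simpa [Fin.sum_univ_two] using sum_norm_sq_row_of_mem_unitaryGroup hSl 1
    congr 1
    linear_combination (1 + ‖Sl 1 1‖ ^ 2) * hrow
  · simpa only [norm_sq_one_sub_sq_ofReal_mul_exp] using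
      isBigO_div_sub_expansion (Real.cos (2 * θ))

/-- Let `Sᴸ = [[R₊ᴸ, T₋ᴸ], [T₊ᴸ, R₋ᴸ]]` be unitary, `R = R₋ᴸ`, `r = |R|`, `R² ≠ 1`.
In the symmetric-potential setting (`R₊ᴿ = R`, `T₋ᴿ = T₊ᴸ`), the right-moving valley
conductivity satisfies `σ_I⁺ = |T₊ᴸ|²(1 + r²)/|1 − R²|² = (1 − r⁴)/|1 − R²|²`.
In particular, writing `R = r e^{iθ}`, for small `r` one has
`σ_I⁺ = 1 + 2 cos(2θ)·r² + O(r⁴)`, so the local conductivity can either decrease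
(`θ = π/2`) or increase (`θ = 0`) under a weak valley-coupling perturbation. -/
theorem symmetric_valley_conductivity (Sl : Matrix (Fin 2) (Fin 2) ℂ)
    (hSl : Sl ∈ Matrix.unitaryGroup (Fin 2) ℂ)
    (hR : Sl 1 1 ^ 2 ≠ 1) :
    ‖Sl 1 0‖ ^ 2 * (1 + ‖Sl 1 1‖ ^ 2) /
        ‖1 - Sl 1 1 ^ 2‖ ^ 2 =
      (1 - ‖Sl 1 1‖ ^ 4) / ‖1 - Sl 1 1 ^ 2‖ ^ 2 ∧
    ∀ θ : ℝ,
      (fun r : ℝ =>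
          (1 - r ^ 4) / ‖1 - ((r : ℂ) * Complex.exp (Complex.I * θ)) ^ 2‖ ^ 2 -
            (1 + 2 * Real.cos (2 * θ) * r ^ 2)) =O[nhds (0 : ℝ)]
        (fun r : ℝ => r ^ 4) :=
  symmetric_valley_conductivity_general Sl hSl
end
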